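/- arXiv:1706.06019 — 2 statements merged into one kernel-verified Lean document; each statement's English description precedes it below -/
import Mathlib

section
/- Let V₀ → V₁ → ... → V_N be a persistence module (a finite sequence of finite-dimensional vector spaces and linear maps), with composites f^{i,j} : V_i → V_j for i ≤ j (f^{i,i} = id). Define d^{i,j} = dim Im f^{i,j} for 0 ≤ i ≤ j ≤ N and d^{i,j} = 0 otherwise. Then for all 0 ≤ i ≤ j ≤ N, the quantity N^{i,j} := d^{i,j} - d^{i-1,j} - d^{i,j+1} + d^{i-1,j+1} is nonnegative. -/
open Module

/-- The composite structure map `f^{i,i+k} : V i → V (i+k)` of a persistence module,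
with `f^{i,i} = id`. -/
noncomputable def pcomp {F : Type*} [Field F] {V : ℕ → Type*} [∀ i, AddCommGroup (V i)]
    [∀ i, Module F (V i)] (f : ∀ i, V i →ₗ[F] V (i + 1)) (i : ℕ) :
    ∀ k, V i →ₗ[F] V (i + k)
  | 0 => LinearMap.id
  | (k + 1) => f (i + k) ∘ₗ pcomp f i k

/-- The rank function `d^{i,j} = dim Im f^{i,j}` of a persistence module `V₀ → ... → V_N`,
extended by `0` for out-of-range indices. -/
noncomputable def prank {F : Type*} [Field F] {V : ℕ → Type*} [∀ i, AddCommGroup (V i)]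
    [∀ i, Module F (V i)] (N : ℕ) (f : ∀ i, V i →ₗ[F] V (i + 1)) (i j : ℤ) : ℕ :=
  if 0 ≤ i ∧ i ≤ j ∧ j ≤ N then
    finrank F (LinearMap.range (pcomp f i.toNat (j - i).toNat))
  else 0

/-!
Write `A = Im f^{i,j}` and `B = Im f^{i-1,j}`, both subspaces of `V_j` with `B ≤ A`, and
`g = f^{j,j+1}`. Then `N^{i,j} = (dim A - dim g A) - (dim B - dim g B)`, and by rank–nullity for
`g` restricted to `A` and to `B` this is `dim (A ⊓ ker g) - dim (B ⊓ ker g) ≥ 0`. At the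
boundary `i = 0` or `j = N` the vanishing terms leave only `dim g A ≤ dim A` or `dim B ≤ dim A`.
-/

section PersistenceModule

variable {F : Type*} [Field F]

lemma finrank_map_add_finrank_le_finrank_add_finrank_map {W W' : Type*} [AddCommGroup W]
    [Module F W] [AddCommGroup W'] [Module F W'] [FiniteDimensional F W]
    (g : W →ₗ[F] W') {A B : Submodule F W} (hBA : B ≤ A) :
    finrank F (A.map g) + finrank F B ≤ finrank F A + finrank F (B.map g) := by
  have hA := (g.domRestrict A).finrank_range_add_finrank_ker
  have hB := (g.domRestrict B).finrank_range_add_finrank_ker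
  rw [LinearMap.range_domRestrict] at hA hB
  have hker : finrank F (LinearMap.ker (g.domRestrict B)) ≤
      finrank F (LinearMap.ker (g.domRestrict A)) :=
    LinearMap.finrank_le_finrank_of_injective
      (f := (Submodule.inclusion hBA).restrict fun _ hx ↦ hx)
      fun _ _ h ↦ Subtype.ext (Submodule.inclusion_injective hBA (congrArg Subtype.val h))
  omega

variable {V : ℕ → Type*} [∀ i, AddCommGroup (V i)] [∀ i, Module F (V i)]

/-- `Im f^{i,j}` as a subspace of `V j`. Recursing on the target puts images with a common target
in one type, which `pcomp f i (j - i)`, landing in `V (i + (j - i))`, does not; for `j < i` the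
value `⊤` is junk. -/
noncomputable def pimage (f : ∀ i, V i →ₗ[F] V (i + 1)) (i : ℕ) : ∀ j, Submodule F (V j)
  | 0 => ⊤
  | j + 1 => if i ≤ j then (pimage f i j).map (f j) else ⊤

variable (f : ∀ i, V i →ₗ[F] V (i + 1))

@[simp]
lemma pimage_self (i : ℕ) : pimage f i i = ⊤ := by
  cases i <;> simp [pimage]

lemma pimage_succ {i j : ℕ} (hij : i ≤ j) : pimage f i (j + 1) = (pimage f i j).map (f j) :=
  if_pos hij

lemma range_pcomp (i k : ℕ) : LinearMap.range (pcomp f i k) = pimage f i (i + k) := by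
  induction k with
  | zero => exact LinearMap.range_id.trans (pimage_self f i).symm
  | succ k ih =>
    rw [pcomp, LinearMap.range_comp, ih]
    exact (pimage_succ f (Nat.le_add_right i k)).symm

lemma pimage_le_pimage_succ {i j : ℕ} (hij : i < j) : pimage f i j ≤ pimage f (i + 1) j := by
  induction j, hij using Nat.le_induction with
  | base => simp
  | succ j hij ih =>
    rw [pimage_succ f hij, pimage_succ f (Nat.le_of_succ_le hij)]
    exact Submodule.map_mono ih

lemma finrank_pimage_succ_le {i j : ℕ} [FiniteDimensional F (V j)] (hij : i ≤ j) :
    finrank F (pimage f i (j + 1)) ≤ finrank F (pimage f i j) := by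
  rw [pimage_succ f hij]
  exact Submodule.finrank_map_le _ _

lemma finrank_pimage_succ_add_finrank_pimage_le {i j : ℕ} [FiniteDimensional F (V j)]
    (hij : i < j) :
    finrank F (pimage f (i + 1) (j + 1)) + finrank F (pimage f i j) ≤
      finrank F (pimage f (i + 1) j) + finrank F (pimage f i (j + 1)) := by
  rw [pimage_succ f hij, pimage_succ f hij.le]
  exact finrank_map_add_finrank_le_finrank_add_finrank_map (f j) (pimage_le_pimage_succ f hij)

lemma prank_natCast_of_le {N i j : ℕ} (hij : i ≤ j) (hjN : j ≤ N) :
    prank N f i j = finrank F (pimage f i j) := by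
  rw [prank, if_pos (by omega), Int.toNat_natCast, show ((j : ℤ) - i).toNat = j - i by omega,
    range_pcomp, Nat.add_sub_cancel' hij]

lemma prank_of_neg (N : ℕ) {i : ℤ} (hi : i < 0) (j : ℤ) : prank N f i j = 0 :=
  if_neg (by omega)

lemma prank_of_lt (N : ℕ) (i : ℤ) {j : ℤ} (hj : N < j) : prank N f i j = 0 :=
  if_neg (by omega)

end PersistenceModule

/-- For a persistence module `V₀ → ... → V_N` of finite-dimensional vector spaces, the
quantity `N^{i,j} = d^{i,j} - d^{i-1,j} - d^{i,j+1} + d^{i-1,j+1}` is nonnegative for all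
`0 ≤ i ≤ j ≤ N`. -/
theorem persistence_interval_multiplicity_nonneg {F : Type*} [Field F] {V : ℕ → Type*}
    [∀ i, AddCommGroup (V i)] [∀ i, Module F (V i)] [∀ i, FiniteDimensional F (V i)]
    (N : ℕ) (f : ∀ i, V i →ₗ[F] V (i + 1)) (i j : ℤ)
    (h0 : 0 ≤ i) (hij : i ≤ j) (hjN : j ≤ N) :
    (0 : ℤ) ≤ (prank N f i j : ℤ) - (prank N f (i - 1) j : ℤ)
      - (prank N f i (j + 1) : ℤ) + (prank N f (i - 1) (j + 1) : ℤ) := by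
  lift i to ℕ using h0
  lift j to ℕ using by omega
  norm_cast at hij hjN
  rw [prank_natCast_of_le f hij hjN, ← Nat.cast_add_one]
  rcases i with _ | i
  · have hi : ((0 : ℕ) : ℤ) - 1 < 0 := by omega
    simp only [prank_of_neg f N hi]
    obtain hjN | rfl : j + 1 ≤ N ∨ j = N := by omega
    · rw [prank_natCast_of_le f (by omega) hjN]
      have := finrank_pimage_succ_le f hij
      omega
    · rw [prank_of_lt f _ _ (by omega)]
      omega
  · rw [show ((i + 1 : ℕ) : ℤ) - 1 = i by omega, prank_natCast_of_le f (by omega) hjN]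
    obtain hjN | rfl : j + 1 ≤ N ∨ j = N := by omega
    · rw [prank_natCast_of_le f (by omega) hjN, prank_natCast_of_le f (by omega) hjN]
      have := finrank_pimage_succ_add_finrank_pimage_le f hij
      omega
    · rw [prank_of_lt f _ _ (by omega), prank_of_lt f _ _ (by omega)]
      have := Submodule.finrank_mono (pimage_le_pimage_succ f hij)
      omega
end

section
/- Suppose a persistence module V₀ → V₁ → ... → V_N (finite-dimensional vector spaces, structure maps f^{i,i+1}) is equipped with subspaces W_i ⊆ V_i such that f^{i,i+1}(W_i) ⊆ W_{i+1} for all 0 ≤ i < N. Let g^{i,j} denote the restriction of the composite f^{i,j} to W_i (with codomain W_j). Then there exists a unique multiset M of intervals [a,b] with 0 ≤ a ≤ b ≤ N such that for all 0 ≤ i ≤ j ≤ N, dim Im g^{i,j} equals the number of intervals in M (with multiplicity) containing [i,j]. -/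
/-!
Summing `m` over the rectangles `a ≤ i`, `j ≤ b ≤ N` is inverted by taking mixed second
differences, so the multiplicities are forced: `m a b` is the mixed difference of the rank function
`r i j = dim f^{i,j}(W_i)`. What remains is that this difference is nonnegative. By rank–nullity the
column drop `r a b - r a (b+1)` is `dim (ker f^{b,b+1} ∩ f^{a,b}(W_a))` (and `r a N` for `b = N`),
and it grows with `a` because `f^{a,a+1}(W_a) ⊆ W_{a+1}` gives `f^{a,b}(W_a) ⊆ f^{a+1,b}(W_{a+1})`.
-/

open Module

open Finset

section Barcode

variable (N : ℕ)

def rectSum (m : ℕ → ℕ → ℤ) (i j : ℕ) : ℤ := ∑ a ∈ range i, ∑ b ∈ Icc j N, m a b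

def mixedDiff (R : ℕ → ℕ → ℤ) (a b : ℕ) : ℤ :=
  R (a + 1) b - R a b - R (a + 1) (b + 1) + R a (b + 1)

def colDrop (R : ℕ → ℕ → ℤ) (a b : ℕ) : ℤ := R a b - R a (b + 1)

lemma mixedDiff_eq_colDrop_sub (R : ℕ → ℕ → ℤ) (a b : ℕ) :
    mixedDiff R a b = colDrop R (a + 1) b - colDrop R a b := by
  rw [mixedDiff, colDrop, colDrop]; ring

lemma mixedDiff_rectSum (m : ℕ → ℕ → ℤ) {a b : ℕ} (hb : b ≤ N) :
    mixedDiff (rectSum N m) a b = m a b := by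
  have hcol : ∀ j, rectSum N m (a + 1) j - rectSum N m a j = ∑ b ∈ Icc j N, m a b := by
    intro j
    rw [rectSum, rectSum, sum_range_succ, add_sub_cancel_left]
  have hIcc : ∑ b' ∈ Icc b N, m a b' = m a b + ∑ b' ∈ Icc (b + 1) N, m a b' := by
    rw [Icc_add_one_left_eq_Ioc, ← sum_Ioc_add_eq_sum_Icc hb, add_comm]
  calc mixedDiff (rectSum N m) a b
      = (rectSum N m (a + 1) b - rectSum N m a b)
          - (rectSum N m (a + 1) (b + 1) - rectSum N m a (b + 1)) := by
        rw [mixedDiff]; ring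
    _ = m a b := by rw [hcol, hcol, hIcc, add_sub_cancel_right]

lemma rectSum_mixedDiff (R : ℕ → ℕ → ℤ) (h0 : ∀ j, R 0 j = 0) (hN : ∀ i, R i (N + 1) = 0)
    (i : ℕ) {j : ℕ} (hj : j ≤ N) : rectSum N (mixedDiff R) i j = R i j := by
  have hrow : ∀ b, ∑ a ∈ range i, mixedDiff R a b = R i b - R i (b + 1) := by
    intro b
    have := sum_range_sub (fun a => R a b - R a (b + 1)) i
    simp only [h0, sub_zero] at this
    rw [← this]
    exact sum_congr rfl fun a _ => by rw [mixedDiff]; ring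
  rw [rectSum, sum_comm, sum_congr rfl fun b _ => hrow b]
  calc ∑ b ∈ Icc j N, (R i b - R i (b + 1))
      = ∑ b ∈ Icc j N, ((fun b => -R i b) (b + 1) - (fun b => -R i b) b) :=
        sum_congr rfl fun b _ => by ring
    _ = -R i (N + 1) - -R i j := sum_Icc_sub hj fun b => -R i b
    _ = R i j := by rw [hN]; ring

variable (r : ℕ → ℕ → ℕ)

/-- The rank function reindexed so that `extRank N r (i + 1) j = r i j`, and extended by zero
to `i = 0` and to `j > N`. -/
def extRank (i j : ℕ) : ℤ := if i = 0 ∨ N < j then 0 else r (i - 1) j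

/-- `m a b` is the multiplicity of the interval `[a, b]`. -/
def IsBarcode (m : ℕ → ℕ → ℕ) : Prop :=
  (∀ a b, ¬(a ≤ b ∧ b ≤ N) → m a b = 0) ∧
    ∀ i j, i ≤ j → j ≤ N → r i j = ∑ a ∈ range (i + 1), ∑ b ∈ Icc j N, m a b

variable {N r}

lemma extRank_zero (j : ℕ) : extRank N r 0 j = 0 := if_pos (Or.inl rfl)

lemma extRank_of_lt {j : ℕ} (hj : N < j) (i : ℕ) : extRank N r i j = 0 := if_pos (Or.inr hj)

lemma extRank_succ (i : ℕ) {j : ℕ} (hj : j ≤ N) : extRank N r (i + 1) j = r i j := by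
  rw [extRank, if_neg (by omega), Nat.add_sub_cancel]

lemma IsBarcode.rectSum_eq {m : ℕ → ℕ → ℕ} (hm : IsBarcode N r m) {i j : ℕ} (hij : i ≤ j + 1) :
    rectSum N (fun a b => m a b) i j = extRank N r i j := by
  rcases i with _ | i
  · simp [rectSum, extRank_zero]
  by_cases hj : N < j
  · simp [rectSum, extRank_of_lt hj, Icc_eq_empty_of_lt hj]
  · rw [rectSum, extRank_succ i (by omega), hm.2 i j (by omega) (by omega)]
    exact_mod_cast rfl

lemma IsBarcode.eq_mixedDiff {m : ℕ → ℕ → ℕ} (hm : IsBarcode N r m) {a b : ℕ} (hab : a ≤ b)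
    (hb : b ≤ N) : (m a b : ℤ) = mixedDiff (extRank N r) a b := by
  rw [← mixedDiff_rectSum N (fun a b => (m a b : ℤ)) hb, mixedDiff, mixedDiff,
    hm.rectSum_eq (by omega), hm.rectSum_eq (by omega), hm.rectSum_eq (by omega),
    hm.rectSum_eq (by omega)]

lemma IsBarcode.unique {m₁ m₂ : ℕ → ℕ → ℕ} (h₁ : IsBarcode N r m₁) (h₂ : IsBarcode N r m₂) :
    m₁ = m₂ := by
  funext a b
  by_cases hab : a ≤ b ∧ b ≤ N
  · exact_mod_cast (h₁.eq_mixedDiff hab.1 hab.2).trans (h₂.eq_mixedDiff hab.1 hab.2).symm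
  · rw [h₁.1 a b hab, h₂.1 a b hab]

lemma isBarcode_toNat_mixedDiff (hr : ∀ a b, a ≤ b → b ≤ N → 0 ≤ mixedDiff (extRank N r) a b) :
    IsBarcode N r fun a b => if a ≤ b ∧ b ≤ N then (mixedDiff (extRank N r) a b).toNat else 0 := by
  refine ⟨fun a b hab => if_neg hab, fun i j hij hj => ?_⟩
  have hrij : (r i j : ℤ) = rectSum N (mixedDiff (extRank N r)) (i + 1) j := by
    rw [rectSum_mixedDiff N _ extRank_zero (extRank_of_lt N.lt_succ_self) _ hj, extRank_succ i hj]
  rw [← Int.natCast_inj, hrij, rectSum]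
  push_cast
  refine sum_congr rfl fun a ha => sum_congr rfl fun b hb => ?_
  rw [mem_range] at ha
  rw [mem_Icc] at hb
  rw [if_pos ⟨by omega, hb.2⟩, Int.toNat_of_nonneg (hr a b (by omega) hb.2)]

theorem existsUnique_isBarcode
    (hr : ∀ a b, a ≤ b → b ≤ N → 0 ≤ mixedDiff (extRank N r) a b) :
    ∃! m, IsBarcode N r m :=
  ⟨_, isBarcode_toNat_mixedDiff hr, fun _ hm => hm.unique (isBarcode_toNat_mixedDiff hr)⟩

end Barcode

section RankNullity

variable {F M M' : Type*} [Field F] [AddCommGroup M] [Module F M] [AddCommGroup M']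
  [Module F M'] [FiniteDimensional F M]

lemma Submodule.finrank_map_add_finrank_ker_inf (φ : M →ₗ[F] M') (S : Submodule F M) :
    finrank F (S.map φ) + finrank F (LinearMap.ker φ ⊓ S : Submodule F M) = finrank F S := by
  have hker : LinearMap.ker (φ.domRestrict S) = (LinearMap.ker φ ⊓ S).comap S.subtype := by
    rw [LinearMap.ker_domRestrict, Submodule.comap_inf, Submodule.comap_subtype_self, inf_top_eq]
  rw [← (Submodule.comapSubtypeEquivOfLe inf_le_right).finrank_eq, ← hker,
    ← LinearMap.range_domRestrict, LinearMap.finrank_range_add_finrank_ker]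

lemma Submodule.finrank_sub_finrank_map_mono (φ : M →ₗ[F] M') {S S' : Submodule F M}
    (h : S ≤ S') :
    (finrank F S : ℤ) - finrank F (S.map φ) ≤ (finrank F S' : ℤ) - finrank F (S'.map φ) := by
  have hS := S.finrank_map_add_finrank_ker_inf φ
  have hS' := S'.finrank_map_add_finrank_ker_inf φ
  have hker := Submodule.finrank_mono (inf_le_inf_left (LinearMap.ker φ) h)
  omega

end RankNullity

section PersistenceSubmodule

variable {F : Type*} [Field F] {V : ℕ → Type*} [∀ i, AddCommGroup (V i)] [∀ i, Module F (V i)]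
  (f : ∀ i, V i →ₗ[F] V (i + 1)) (W : ∀ i, Submodule F (V i))

/-- `imageFrom f W i j = f^{i,j}(W i)` for `i ≤ j`, indexed by the absolute position `j` so that
`f j` applies to it; junk value `⊥` for `j < i`. -/
noncomputable def imageFrom (i : ℕ) : ∀ j, Submodule F (V j)
  | 0 => if h : i = 0 then h ▸ W i else ⊥
  | j + 1 => if h : i = j + 1 then h ▸ W i else (imageFrom i j).map (f j)

lemma imageFrom_self (i : ℕ) : imageFrom f W i i = W i := by
  cases i <;> simp [imageFrom]

lemma imageFrom_succ {i j : ℕ} (h : i ≤ j) :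
    imageFrom f W i (j + 1) = (imageFrom f W i j).map (f j) := by
  simp [imageFrom, show i ≠ j + 1 by omega]

lemma map_pcomp_eq_imageFrom (i : ℕ) :
    ∀ k, (W i).map (pcomp f i k) = imageFrom f W i (i + k)
  | 0 => (Submodule.map_id _).trans (imageFrom_self f W i).symm
  | k + 1 => by
    change _ = imageFrom f W i (i + k + 1)
    rw [imageFrom_succ f W (Nat.le_add_right i k), ← map_pcomp_eq_imageFrom i k,
      ← Submodule.map_comp]
    rfl

noncomputable def imageRank (i j : ℕ) : ℕ := finrank F ((W i).map (pcomp f i (j - i)))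

lemma imageRank_eq_finrank_imageFrom {i j : ℕ} (h : i ≤ j) :
    imageRank f W i j = finrank F (imageFrom f W i j) := by
  obtain ⟨k, rfl⟩ := Nat.exists_eq_add_of_le h
  rw [imageRank, Nat.add_sub_cancel_left, map_pcomp_eq_imageFrom]

lemma imageFrom_le_imageFrom_succ {i : ℕ} (hW : (W i).map (f i) ≤ W (i + 1)) {j : ℕ}
    (hij : i < j) : imageFrom f W i j ≤ imageFrom f W (i + 1) j := by
  induction j, hij using Nat.le_induction with
  | base => rwa [imageFrom_succ f W le_rfl, imageFrom_self, imageFrom_self]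
  | succ j hij ih =>
    rw [imageFrom_succ f W (by omega), imageFrom_succ f W hij]
    exact Submodule.map_mono ih

variable [∀ i, FiniteDimensional F (V i)]

lemma mixedDiff_extRank_imageRank_nonneg {N : ℕ}
    (hW : ∀ i, i < N → (W i).map (f i) ≤ W (i + 1)) {a b : ℕ} (hab : a ≤ b) (hb : b ≤ N) :
    0 ≤ mixedDiff (extRank N (imageRank f W)) a b := by
  let drop (S : Submodule F (V b)) : ℤ :=
    finrank F S - if b = N then 0 else finrank F (S.map (f b))
  have drop_mono : Monotone drop := fun S S' h => by
    dsimp only [drop]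
    split_ifs
    · simpa using Submodule.finrank_mono h
    · exact Submodule.finrank_sub_finrank_map_mono (f b) h
  have hcol : ∀ i ≤ b,
      colDrop (extRank N (imageRank f W)) (i + 1) b = drop (imageFrom f W i b) := by
    intro i hi
    rw [colDrop, extRank_succ i hb, imageRank_eq_finrank_imageFrom f W hi]
    by_cases hbN : b = N
    · simp [drop, hbN, extRank_of_lt N.lt_succ_self]
    · rw [extRank_succ i (by omega), imageRank_eq_finrank_imageFrom f W (by omega),
        imageFrom_succ f W hi]
      simp [drop, hbN]
  rw [mixedDiff_eq_colDrop_sub, sub_nonneg]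
  rcases a with _ | a
  · have hbot : drop ⊥ = 0 := by simp [drop]
    rw [hcol 0 b.zero_le, colDrop, extRank_zero, extRank_zero, sub_zero, ← hbot]
    exact drop_mono bot_le
  · rw [hcol (a + 1) hab, hcol a (by omega)]
    exact drop_mono (imageFrom_le_imageFrom_succ f W (hW a (by omega)) (by omega))

end PersistenceSubmodule

open Module in
/-- **Barcode decomposition for a persistence submodule.** If a persistence module
`V₀ → ... → V_N` is equipped with subspaces `W_i ⊆ V_i` preserved by the structure maps,
and `g^{i,j}` denotes the restriction of `f^{i,j}` to `W_i`, then there is a unique multiset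
`m` of intervals `[a,b] ⊆ [0,N]` such that `dim Im g^{i,j}` equals the number of intervals
of `m` (with multiplicity) containing `[i,j]`, for all `0 ≤ i ≤ j ≤ N`. -/
theorem persistence_submodule_barcode {F : Type*} [Field F] {V : ℕ → Type*}
    [∀ i, AddCommGroup (V i)] [∀ i, Module F (V i)] [∀ i, FiniteDimensional F (V i)]
    (N : ℕ) (f : ∀ i, V i →ₗ[F] V (i + 1)) (W : ∀ i, Submodule F (V i))
    (hW : ∀ i, i < N → Submodule.map (f i) (W i) ≤ W (i + 1)) :
    ∃! m : ℕ → ℕ → ℕ,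
      (∀ a b, ¬(a ≤ b ∧ b ≤ N) → m a b = 0) ∧
      ∀ i j, i ≤ j → j ≤ N →
        finrank F (Submodule.map (pcomp f i (j - i)) (W i)) =
          ∑ a ∈ Finset.range (i + 1), ∑ b ∈ Finset.Icc j N, m a b :=
  existsUnique_isBarcode fun _ _ hab hb => mixedDiff_extRank_imageRank_nonneg f W hW hab hb
end
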